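/- Let d(·) be the distance in trace norm to the positive semidefinite cone among Hermitian matrices (of fixed trace d). Suppose A₁ and A₂ are Choi operators of CP maps (A₁, A₂ ⪰ 0), but their composition's Choi operator A₁₂ = I + η₁₂ (σ_x ⊗ σ_x) has |η₁₂| > 1. Then the activation gap Δ_act = N_χ(A₁₂) − max{N_χ(A₁), N_χ(A₂)} = 2(|η₁₂| − 1) > 0. -/

import Mathlib

open scoped Classical ComplexOrder Kronecker

noncomputable def sigmaX : Matrix (Fin 2) (Fin 2) ℂ := !![0, 1; 1, 0]

noncomputable def choiNegativity {n : Type*} [Fintype n] [DecidableEq n]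
    (A : Matrix n n ℂ) : ℝ :=
  if h : A.IsHermitian then
    ∑ i ∈ Finset.univ.filter (fun i => h.eigenvalues i < 0), |h.eigenvalues i|
  else 0

-- basics about M = σx ⊗ σx
lemma sigmaXX_herm : (sigmaX ⊗ₖ sigmaX).IsHermitian := by
  show Matrix.conjTranspose _ = _
  ext ⟨i, j⟩ ⟨k, l⟩
  fin_cases i <;> fin_cases j <;> fin_cases k <;> fin_cases l <;>
    simp [sigmaX, Matrix.conjTranspose_apply, Matrix.kroneckerMap_apply]

lemma sigmaXX_sq : (sigmaX ⊗ₖ sigmaX) * (sigmaX ⊗ₖ sigmaX) = 1 := by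
  rw [← Matrix.mul_kronecker_mul]
  have : sigmaX * sigmaX = 1 := by
    ext i j
    fin_cases i <;> fin_cases j <;> simp [sigmaX, Matrix.mul_apply, Fin.sum_univ_succ]
  rw [this, Matrix.one_kronecker_one]

lemma sigmaXX_trace : (sigmaX ⊗ₖ sigmaX).trace = 0 := by
  simp [Matrix.trace, sigmaX, Matrix.kroneckerMap_apply, Fintype.sum_prod_type,
    Fin.sum_univ_succ]

lemma matA_herm (η : ℝ) :
    ((1 : Matrix (Fin 2 × Fin 2) (Fin 2 × Fin 2) ℂ) + (η : ℂ) • (sigmaX ⊗ₖ sigmaX)).IsHermitian := by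
  show Matrix.conjTranspose _ = _
  rw [Matrix.conjTranspose_add, Matrix.conjTranspose_smul, Matrix.conjTranspose_one,
    sigmaXX_herm.eq]
  norm_num

lemma matA_sq (η : ℝ) :
    ((1 : Matrix (Fin 2 × Fin 2) (Fin 2 × Fin 2) ℂ) + (η : ℂ) • (sigmaX ⊗ₖ sigmaX))
      * ((1 : Matrix (Fin 2 × Fin 2) (Fin 2 × Fin 2) ℂ) + (η : ℂ) • (sigmaX ⊗ₖ sigmaX))
    = (2 : ℂ) • ((1 : Matrix (Fin 2 × Fin 2) (Fin 2 × Fin 2) ℂ) + (η : ℂ) • (sigmaX ⊗ₖ sigmaX))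
      + ((η : ℂ) ^ 2 - 1) • 1 := by
  simp only [add_mul, mul_add, Matrix.smul_mul, Matrix.mul_smul, sigmaXX_sq, one_mul,
    mul_one, smul_smul]
  module

open Matrix in
lemma eig_mem (η : ℝ) (i : Fin 2 × Fin 2) :
    (matA_herm η).eigenvalues i = 1 + η ∨ (matA_herm η).eigenvalues i = 1 - η := by
  set A := (1 : Matrix (Fin 2 × Fin 2) (Fin 2 × Fin 2) ℂ) + (η : ℂ) • (sigmaX ⊗ₖ sigmaX) with hAdef
  have hA := matA_herm η
  set ev := hA.eigenvalues i with hev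
  set v : (Fin 2 × Fin 2) → ℂ := ⇑(hA.eigenvectorBasis i) with hvdef
  have hv : A *ᵥ v = ev • v := hA.mulVec_eigenvectorBasis i
  obtain ⟨j, hj⟩ : ∃ j, v j ≠ 0 := by
    by_contra hcon
    push_neg at hcon
    have h0 : hA.eigenvectorBasis i = 0 := by
      ext j
      exact hcon j
    exact hA.eigenvectorBasis.orthonormal.ne_zero i h0
  have e1 : (A *ᵥ (A *ᵥ v)) j = (ev : ℂ) ^ 2 * v j := by
    rw [hv, Matrix.mulVec_smul, hv]
    simp [Pi.smul_apply, Complex.real_smul]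
    ring
  have e2 : (A *ᵥ (A *ᵥ v)) j = 2 * (ev : ℂ) * v j + ((η : ℂ) ^ 2 - 1) * v j := by
    rw [Matrix.mulVec_mulVec, matA_sq η, Matrix.add_mulVec, Matrix.smul_mulVec,
      Matrix.smul_mulVec, hv, Matrix.one_mulVec]
    simp [Pi.smul_apply, Complex.real_smul]
    ring
  have key : ((ev : ℂ) - (1 + η)) * ((ev : ℂ) - (1 - η)) * v j = 0 := by
    rw [e2] at e1
    linear_combination -e1
  rcases mul_eq_zero.mp key with h | h
  · rcases mul_eq_zero.mp h with h | h
    · left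
      have : (ev : ℂ) = ((1 + η : ℝ) : ℂ) := by push_cast; linear_combination h
      exact_mod_cast this
    · right
      have : (ev : ℂ) = ((1 - η : ℝ) : ℂ) := by push_cast; linear_combination h
      exact_mod_cast this
  · exact absurd h hj

lemma eig_sum (η : ℝ) : ∑ i, (matA_herm η).eigenvalues i = 4 := by
  have hA := matA_herm η
  have h1 : ((1 : Matrix (Fin 2 × Fin 2) (Fin 2 × Fin 2) ℂ)
      + (η : ℂ) • (sigmaX ⊗ₖ sigmaX)).trace = 4 := by
    rw [Matrix.trace_add, Matrix.trace_smul, Matrix.trace_one, sigmaXX_trace]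
    simp
  have h2 : ((1 : Matrix (Fin 2 × Fin 2) (Fin 2 × Fin 2) ℂ)
      + (η : ℂ) • (sigmaX ⊗ₖ sigmaX)).trace = ∑ i, ((matA_herm η).eigenvalues i : ℂ) := by
    conv_lhs => rw [(matA_herm η).spectral_theorem]
    rw [Unitary.conjStarAlgAut_apply]
    rw [Matrix.trace_mul_comm, ← mul_assoc]
    rw [Matrix.UnitaryGroup.star_mul_self, one_mul, Matrix.trace_diagonal]
    simp
  have : ((∑ i, (matA_herm η).eigenvalues i : ℝ) : ℂ) = ((4 : ℝ) : ℂ) := by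
    push_cast
    rw [← h2, h1]
  exact_mod_cast this

lemma count_two {α : Type*} [Fintype α] [DecidableEq α] (f : α → ℝ) (a b : ℝ)
    (hcard : Fintype.card α = 4) (hmem : ∀ i, f i = a ∨ f i = b) (hab : a ≠ b)
    (hsum : ∑ i, f i = 2 * a + 2 * b) :
    (Finset.univ.filter (fun i => f i = b)).card = 2 := by
  classical
  set T := Finset.univ.filter (fun i => f i = a) with hT
  set S := Finset.univ.filter (fun i => f i = b) with hS
  have hdisj : ∀ i, i ∈ S ↔ ¬ (f i = a) := by
    intro i
    simp only [hS, Finset.mem_filter, Finset.mem_univ, true_and]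
    constructor
    · intro h h'; exact hab (h'.symm.trans h)
    · intro h; rcases hmem i with h' | h'
      · exact absurd h' h
      · exact h'
  have hSeq : S = Finset.univ.filter (fun i => ¬ f i = a) := by
    ext i; simp only [Finset.mem_filter, Finset.mem_univ, true_and]
    simpa using hdisj i
  have hcards : T.card + S.card = 4 := by
    rw [hSeq, Finset.card_filter_add_card_filter_not, Finset.card_univ, hcard]
  have hsumsplit : ∑ i, f i = (T.card : ℝ) * a + (S.card : ℝ) * b := by
    rw [← Finset.sum_filter_add_sum_filter_not Finset.univ (fun i => f i = a) f]
    congr 1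
    · rw [Finset.sum_congr rfl (fun i hi => (Finset.mem_filter.mp hi).2),
        Finset.sum_const, nsmul_eq_mul]
    · rw [← hSeq, Finset.sum_congr rfl (fun i hi => ((hdisj i).mp hi |> fun h =>
        (hmem i).resolve_left h)), Finset.sum_const, nsmul_eq_mul]
  have hTr : (T.card : ℝ) = 4 - (S.card : ℝ) := by
    have h4 : (T.card : ℝ) + S.card = 4 := by exact_mod_cast hcards
    linarith
  rw [hsumsplit, hTr] at hsum
  have h0 : ((S.card : ℝ) - 2) * (b - a) = 0 := by linear_combination hsum
  rcases mul_eq_zero.mp h0 with h | h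
  · have : (S.card : ℝ) = 2 := by linarith
    exact_mod_cast this
  · exact absurd (by linarith : b = a) (Ne.symm hab)

lemma neg_psd {n : Type*} [Fintype n] [DecidableEq n] {A : Matrix n n ℂ}
    (hA : A.PosSemidef) : choiNegativity A = 0 := by
  rw [choiNegativity, dif_pos hA.1]
  rw [Finset.filter_false_of_mem, Finset.sum_empty]
  intro i _
  exact not_lt.mpr (hA.eigenvalues_nonneg i)

lemma neg_main (η : ℝ) (h : 1 < |η|) :
    choiNegativity ((1 : Matrix (Fin 2 × Fin 2) (Fin 2 × Fin 2) ℂ)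
      + (η : ℂ) • (sigmaX ⊗ₖ sigmaX)) = 2 * (|η| - 1) := by
  rw [choiNegativity, dif_pos (matA_herm η)]
  set f := (matA_herm η).eigenvalues with hf
  have hmem : ∀ i, f i = 1 + η ∨ f i = 1 - η := eig_mem η
  have hsum : ∑ i, f i = 4 := eig_sum η
  have hcard4 : Fintype.card (Fin 2 × Fin 2) = 4 := by simp
  rcases lt_abs.mp h with hp | hn
  · -- η > 1
    have hb : (Finset.univ.filter (fun i => f i = 1 - η)).card = 2 :=
      count_two f (1 + η) (1 - η) hcard4 hmem
        (by intro hh; linarith)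
        (by rw [hsum]; ring)
    have hfilter : Finset.univ.filter (fun i => f i < 0)
        = Finset.univ.filter (fun i => f i = 1 - η) := by
      ext i
      simp only [Finset.mem_filter, Finset.mem_univ, true_and]
      constructor
      · intro hlt
        rcases hmem i with h' | h'
        · exfalso; rw [h'] at hlt; linarith
        · exact h'
      · intro h'; rw [h']; linarith
    rw [hfilter,
      Finset.sum_congr rfl (fun i hi => by
        rw [(Finset.mem_filter.mp hi).2] : ∀ i ∈ _, |f i| = |1 - η|),
      Finset.sum_const, hb, nsmul_eq_mul]
    rw [abs_of_neg (by linarith : (1:ℝ) - η < 0), abs_of_pos (by linarith : (0:ℝ) < η)]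
    push_cast
    ring
  · -- η < -1
    have hη : η < -1 := by linarith
    have hb : (Finset.univ.filter (fun i => f i = 1 + η)).card = 2 :=
      count_two f (1 - η) (1 + η) hcard4 (fun i => (hmem i).symm)
        (by intro hh; linarith)
        (by rw [hsum]; ring)
    have hfilter : Finset.univ.filter (fun i => f i < 0)
        = Finset.univ.filter (fun i => f i = 1 + η) := by
      ext i
      simp only [Finset.mem_filter, Finset.mem_univ, true_and]
      constructor
      · intro hlt
        rcases hmem i with h' | h'
        · exact h'
        · exfalso; rw [h'] at hlt; linarith
      · intro h'; rw [h']; linarith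
    rw [hfilter,
      Finset.sum_congr rfl (fun i hi => by
        rw [(Finset.mem_filter.mp hi).2] : ∀ i ∈ _, |f i| = |1 + η|),
      Finset.sum_const, hb, nsmul_eq_mul]
    rw [abs_of_neg (by linarith : (1:ℝ) + η < 0), abs_of_neg (by linarith : η < 0)]
    push_cast
    ring

theorem superactivation_gap (η₁ η₂ η₁₂ : ℝ)
    (hA₁ : ((1 : Matrix (Fin 2 × Fin 2) (Fin 2 × Fin 2) ℂ)
        + (η₁ : ℂ) • (sigmaX ⊗ₖ sigmaX)).PosSemidef)
    (hA₂ : ((1 : Matrix (Fin 2 × Fin 2) (Fin 2 × Fin 2) ℂ)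
        + (η₂ : ℂ) • (sigmaX ⊗ₖ sigmaX)).PosSemidef)
    (h₁₂ : 1 < |η₁₂|) :
    choiNegativity ((1 : Matrix (Fin 2 × Fin 2) (Fin 2 × Fin 2) ℂ)
        + (η₁₂ : ℂ) • (sigmaX ⊗ₖ sigmaX))
      - max
        (choiNegativity ((1 : Matrix (Fin 2 × Fin 2) (Fin 2 × Fin 2) ℂ)
          + (η₁ : ℂ) • (sigmaX ⊗ₖ sigmaX)))
        (choiNegativity ((1 : Matrix (Fin 2 × Fin 2) (Fin 2 × Fin 2) ℂ)
          + (η₂ : ℂ) • (sigmaX ⊗ₖ sigmaX)))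
      = 2 * (|η₁₂| - 1)
    ∧ 0 < 2 * (|η₁₂| - 1) := by
  constructor
  · rw [neg_psd hA₁, neg_psd hA₂, max_self, sub_zero, neg_main η₁₂ h₁₂]
  · linarith
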